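/- For all x, y ≥ 0 with x + y ≤ 1, ν(x + y) ≤ ν(x) + ν(y), where ν(x) = Σ_{d≥1} d·ε_d(x)·2^{-d} (subadditivity of the new entropy function). -/

import Mathlib

/-! Writing `r_k(x) = fract (2^k x) / 2^k` for the distance from `x` down to the grid `2^{-k} ℤ`,
the binary digits satisfy `ε_{d+1}(x) = 2 fract (2^d x) - fract (2^{d+1} x)`, so the partial sums of
`ν` telescope to `∑_{k<N} r_k(x) - N r_N(x)`. Hence `ν(x) = ∑_k r_k(x)`, and each `r_k` is
subadditive because `fract` is. -/

noncomputable def epsBit (d : ℕ) (x : ℝ) : ℝ := ((⌊2 ^ d * x⌋ % 2 : ℤ) : ℝ)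

noncomputable def nu (x : ℝ) : ℝ := ∑' d : ℕ, (d : ℝ) * epsBit d x / 2 ^ d

open Filter Topology

theorem Int.floor_two_mul_emod_two {R : Type*} [CommRing R] [LinearOrder R] [IsStrictOrderedRing R]
    [FloorRing R] (z : R) : ⌊2 * z⌋ % 2 = ⌊2 * z⌋ - 2 * ⌊z⌋ := by
  have lower : 2 * ⌊z⌋ ≤ ⌊2 * z⌋ := by
    rw [Int.le_floor]; push_cast; linarith [Int.floor_le z]
  have upper : ⌊2 * z⌋ < 2 * ⌊z⌋ + 2 := by
    rw [Int.floor_lt]; push_cast; linarith [Int.lt_floor_add_one z]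
  omega

noncomputable def dyadicResidue (x : ℝ) (k : ℕ) : ℝ := Int.fract (2 ^ k * x) / 2 ^ k

lemma dyadicResidue_nonneg (x : ℝ) (k : ℕ) : 0 ≤ dyadicResidue x k :=
  div_nonneg (Int.fract_nonneg _) (by positivity)

lemma dyadicResidue_le (x : ℝ) (k : ℕ) : dyadicResidue x k ≤ (1 / 2) ^ k := by
  rw [dyadicResidue, one_div_pow]
  gcongr
  exact (Int.fract_lt_one _).le

lemma dyadicResidue_add_le (x y : ℝ) (k : ℕ) :
    dyadicResidue (x + y) k ≤ dyadicResidue x k + dyadicResidue y k := by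
  rw [dyadicResidue, dyadicResidue, dyadicResidue, ← add_div, mul_add]
  gcongr
  exact Int.fract_add_le _ _

lemma summable_dyadicResidue (x : ℝ) : Summable (dyadicResidue x) :=
  .of_nonneg_of_le (dyadicResidue_nonneg x) (dyadicResidue_le x) summable_geometric_two

lemma tendsto_mul_dyadicResidue (x : ℝ) :
    Tendsto (fun k : ℕ => (k : ℝ) * dyadicResidue x k) atTop (𝓝 0) :=
  squeeze_zero (fun k => mul_nonneg k.cast_nonneg (dyadicResidue_nonneg x k))
    (fun k => mul_le_mul_of_nonneg_left (dyadicResidue_le x k) k.cast_nonneg)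
    (tendsto_self_mul_const_pow_of_lt_one (by norm_num) (by norm_num))

lemma epsBit_nonneg (d : ℕ) (x : ℝ) : 0 ≤ epsBit d x := by
  unfold epsBit
  exact_mod_cast Int.emod_nonneg _ two_ne_zero

lemma epsBit_succ (d : ℕ) (x : ℝ) :
    epsBit (d + 1) x = 2 * Int.fract (2 ^ d * x) - Int.fract (2 ^ (d + 1) * x) := by
  have h := Int.floor_two_mul_emod_two (2 ^ d * x)
  rw [← mul_assoc, ← pow_succ'] at h
  rw [epsBit, h, Int.fract, Int.fract]
  push_cast
  ring

lemma nu_term_succ (d : ℕ) (x : ℝ) :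
    ((d + 1 : ℕ) : ℝ) * epsBit (d + 1) x / 2 ^ (d + 1)
      = dyadicResidue x d + d * dyadicResidue x d - (d + 1 : ℕ) * dyadicResidue x (d + 1) := by
  rw [epsBit_succ, dyadicResidue, dyadicResidue, pow_succ]
  push_cast
  field_simp
  ring

lemma sum_range_succ_nu_term (x : ℝ) (N : ℕ) :
    ∑ d ∈ Finset.range (N + 1), (d : ℝ) * epsBit d x / 2 ^ d
      = ∑ k ∈ Finset.range N, dyadicResidue x k - N * dyadicResidue x N := by
  induction N with
  | zero => simp
  | succ N ih =>
    rw [Finset.sum_range_succ, ih, Finset.sum_range_succ, nu_term_succ]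
    ring

lemma nu_eq_tsum_dyadicResidue (x : ℝ) : nu x = ∑' k, dyadicResidue x k := by
  have hasSum : HasSum (fun d : ℕ => (d : ℝ) * epsBit d x / 2 ^ d) (∑' k, dyadicResidue x k) := by
    rw [hasSum_iff_tendsto_nat_of_nonneg (fun d => by have := epsBit_nonneg d x; positivity),
      ← tendsto_add_atTop_iff_nat 1]
    simp only [sum_range_succ_nu_term]
    simpa using (summable_dyadicResidue x).hasSum.tendsto_sum_nat.sub (tendsto_mul_dyadicResidue x)
  exact hasSum.tsum_eq

theorem nu_subadditive :
    ∀ x y : ℝ, 0 ≤ x → 0 ≤ y → x + y ≤ 1 → nu (x + y) ≤ nu x + nu y := by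
  intro x y _ _ _
  simp only [nu_eq_tsum_dyadicResidue]
  rw [← (summable_dyadicResidue x).tsum_add (summable_dyadicResidue y)]
  exact (summable_dyadicResidue _).tsum_le_tsum (dyadicResidue_add_le x y)
    ((summable_dyadicResidue x).add (summable_dyadicResidue y))
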